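/- Let V : ℤ^d → ℂ be Γ-periodic and suppose V is (s,t)-separable for some 1 ≤ s < t ≤ d, i.e. V(n) = V_s(n₁,…,n_{t-1},n_{t+1},…,n_d) + V_t(n₁,…,n_{s-1},n_{s+1},…,n_d). Then for every l in the fundamental domain W with l_s ≠ 0 and l_t ≠ 0, the discrete Fourier coefficient V̂(l) = 0. -/

import Mathlib

open scoped BigOperators

/-- Discrete Fourier transform over the fundamental domain `W = ∏ [0, qⱼ-1]`. -/
noncomputable def dft {d : ℕ} (q : Fin d → ℕ) (V : (Fin d → ℤ) → ℂ)
    (l : Fin d → ℤ) : ℂ :=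
  (1 / ∏ j, (q j : ℂ)) *
    ∑ n : (∀ j, Fin (q j)), V (fun j => ((n j : ℕ) : ℤ)) *
      Complex.exp (-(2 * Real.pi * Complex.I) *
        ∑ j, (l j : ℂ) * ((n j : ℕ) : ℂ) / (q j : ℂ))

/-- The average `[V]` of `V` over the periodicity cell. -/
noncomputable def avgW {d : ℕ} (q : Fin d → ℕ) (V : (Fin d → ℤ) → ℂ) : ℂ :=
  (1 / ∏ j, (q j : ℂ)) * ∑ n : (∀ j, Fin (q j)), V (fun j => ((n j : ℕ) : ℤ))

/-- `Γ`-periodicity for `Γ = q₁ℤ ⊕ ⋯ ⊕ q_dℤ`. -/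
def IsPeriodic {d : ℕ} (q : Fin d → ℕ) (V : (Fin d → ℤ) → ℂ) : Prop :=
  ∀ (n : Fin d → ℤ) (j : Fin d),
    V (fun i => n i + if i = j then (q i : ℤ) else 0) = V n

/-- `f` depends only on the coordinates in `S`. -/
def DependsOnlyOn {d : ℕ} (S : Set (Fin d)) (f : (Fin d → ℤ) → ℂ) : Prop :=
  ∀ n n' : Fin d → ℤ, (∀ j ∈ S, n j = n' j) → f n = f n'

/-- `(s,t)`-separability: `V = V_s + V_t` where `V_s` does not depend on coordinate `t`
and `V_t` does not depend on coordinate `s`. -/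
def SepPair {d : ℕ} (s t : Fin d) (V : (Fin d → ℤ) → ℂ) : Prop :=
  ∃ Vs Vt : (Fin d → ℤ) → ℂ,
    DependsOnlyOn ({t} : Set (Fin d))ᶜ Vs ∧
    DependsOnlyOn ({s} : Set (Fin d))ᶜ Vt ∧
    ∀ n, V n = Vs n + Vt n


lemma geom_vanish (Q L : ℕ) (h0 : L ≠ 0) (hL : L < Q) :
    ∑ a : Fin Q, Complex.exp (-(2 * Real.pi * Complex.I) * ((L : ℂ) * (a : ℕ) / (Q : ℂ))) = 0 := by
  have hQ : 0 < Q := lt_of_le_of_lt (Nat.zero_le _) hL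
  have hQC : (Q : ℂ) ≠ 0 := Nat.cast_ne_zero.mpr hQ.ne'
  set x : ℂ := Complex.exp (-(2 * Real.pi * Complex.I) * ((L : ℂ) / (Q : ℂ))) with hx
  have hpow : ∀ a : ℕ, Complex.exp (-(2 * Real.pi * Complex.I) * ((L : ℂ) * a / (Q : ℂ))) = x ^ a := by
    intro a
    rw [hx, ← Complex.exp_nat_mul]
    ring_nf
  have hxQ : x ^ Q = 1 := by
    rw [hx, ← Complex.exp_nat_mul]
    have h : (Q : ℂ) * (-(2 * Real.pi * Complex.I) * ((L : ℂ) / (Q : ℂ)))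
        = ((-(L : ℤ) : ℤ) : ℂ) * (2 * Real.pi * Complex.I) := by
      push_cast
      field_simp
    rw [h, Complex.exp_int_mul_two_pi_mul_I]
  have hx1 : x ≠ 1 := by
    rw [hx]
    intro heq
    rw [Complex.exp_eq_one_iff] at heq
    obtain ⟨n, hn⟩ := heq
    have h2 : (2 * Real.pi * Complex.I : ℂ) ≠ 0 := by
      simp [Real.pi_ne_zero, Complex.I_ne_zero, Complex.ofReal_ne_zero]
    have hn' : (-(L : ℂ) / (Q : ℂ)) * (2 * Real.pi * Complex.I) = (n : ℂ) * (2 * Real.pi * Complex.I) := by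
      rw [← hn]; ring
    have hdiv : -(L : ℂ) / (Q : ℂ) = (n : ℂ) := mul_right_cancel₀ h2 hn'
    have hLC : (L : ℂ) = -(n : ℂ) * (Q : ℂ) := by
      field_simp at hdiv
      linear_combination -hdiv
    have hLZ : (L : ℤ) = -n * (Q : ℤ) := by exact_mod_cast hLC
    have hL0 : 0 < (L : ℤ) := Int.natCast_pos.mpr (Nat.pos_of_ne_zero h0)
    have hQZ : 0 < (Q : ℤ) := Int.natCast_pos.mpr hQ
    have hLQ : (L : ℤ) < (Q : ℤ) := Int.ofNat_lt.mpr hL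
    have hLZ' : (L : ℤ) + n * (Q : ℤ) = 0 := by rw [hLZ]; ring
    rcases lt_trichotomy n 0 with h | h | h
    · have h1 : (1 : ℤ) ≤ -n := by omega
      have h2 : (Q : ℤ) ≤ -n * (Q : ℤ) := le_mul_of_one_le_left hQZ.le h1
      have h3 : -n * (Q : ℤ) = -(n * (Q : ℤ)) := by ring
      linarith
    · rw [h] at hLZ'; simp at hLZ'; omega
    · have h2 : 0 < n * (Q : ℤ) := mul_pos h hQZ
      linarith
  calc ∑ a : Fin Q, Complex.exp (-(2 * Real.pi * Complex.I) * ((L : ℂ) * ((a : ℕ) : ℂ) / (Q : ℂ)))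
      = ∑ a : Fin Q, x ^ (a : ℕ) := by
        refine Finset.sum_congr rfl fun a _ => hpow a
    _ = ∑ k ∈ Finset.range Q, x ^ k := Fin.sum_univ_eq_sum_range _ _
    _ = (x ^ Q - 1) / (x - 1) := geom_sum_eq hx1 Q
    _ = 0 := by rw [hxQ, sub_self, zero_div]

lemma sum_vanish {d : ℕ} (q : Fin d → ℕ) (hq : ∀ j, 0 < q j)
    (f : (Fin d → ℤ) → ℂ) (i : Fin d) (hf : DependsOnlyOn ({i} : Set (Fin d))ᶜ f)
    (l : ∀ j, Fin (q j)) (h0 : (l i : ℕ) ≠ 0) :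
    ∑ n : (∀ j, Fin (q j)), f (fun j => ((n j : ℕ) : ℤ)) *
      Complex.exp (-(2 * Real.pi * Complex.I) *
        ∑ j, ((l j : ℕ) : ℂ) * ((n j : ℕ) : ℂ) / (q j : ℂ)) = 0 := by
  classical
  set c : ℂ := -(2 * Real.pi * Complex.I) with hc
  set F : (∀ j, Fin (q j)) → ℂ := fun n => f (fun j => ((n j : ℕ) : ℤ)) *
      Complex.exp (c * ∑ j, ((l j : ℕ) : ℂ) * ((n j : ℕ) : ℂ) / (q j : ℂ)) with hF
  set e := Equiv.piSplitAt i (fun j => Fin (q j)) with he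
  have hsum : ∑ n : (∀ j, Fin (q j)), F n = ∑ p, F (e.symm p) :=
    (Equiv.sum_comp e.symm F).symm
  show ∑ n, F n = 0
  rw [hsum, Fintype.sum_prod_type, Finset.sum_comm]
  refine Finset.sum_eq_zero fun g _ => ?_
  -- coordinates of e.symm (a, g)
  have hni : ∀ a : Fin (q i), e.symm (a, g) i = a := fun a => by
    simp [he, Equiv.piSplitAt]
  have hnj : ∀ (a : Fin (q i)) (j : Fin d) (h : j ≠ i), e.symm (a, g) j = g ⟨j, h⟩ :=
    fun a j h => by simp [he, Equiv.piSplitAt, h]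
  set a₀ : Fin (q i) := ⟨0, hq i⟩ with ha₀
  have key : ∀ a : Fin (q i), F (e.symm (a, g)) =
      (f (fun j => ((e.symm (a₀, g) j : ℕ) : ℤ)) *
        Complex.exp (c * ∑ j ∈ Finset.univ.erase i,
          ((l j : ℕ) : ℂ) * ((e.symm (a₀, g) j : ℕ) : ℂ) / (q j : ℂ))) *
      Complex.exp (c * (((l i : ℕ) : ℂ) * ((a : ℕ) : ℂ) / (q i : ℂ))) := by
    intro a
    have hfeq : f (fun j => ((e.symm (a, g) j : ℕ) : ℤ)) =
        f (fun j => ((e.symm (a₀, g) j : ℕ) : ℤ)) := by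
      refine hf _ _ fun j hj => ?_
      have h : j ≠ i := by simpa using hj
      rw [hnj a j h, hnj a₀ j h]
    have hsplit : ∑ j, ((l j : ℕ) : ℂ) * ((e.symm (a, g) j : ℕ) : ℂ) / (q j : ℂ) =
        ((l i : ℕ) : ℂ) * ((a : ℕ) : ℂ) / (q i : ℂ) +
        ∑ j ∈ Finset.univ.erase i,
          ((l j : ℕ) : ℂ) * ((e.symm (a₀, g) j : ℕ) : ℂ) / (q j : ℂ) := by
      rw [← Finset.add_sum_erase Finset.univ _ (Finset.mem_univ i), hni a]
      congr 1
      refine Finset.sum_congr rfl fun j hj => ?_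
      have h : j ≠ i := (Finset.mem_erase.mp hj).1
      rw [hnj a j h, hnj a₀ j h]
    rw [hF]
    dsimp only
    rw [hfeq, hsplit, mul_add, Complex.exp_add]
    ring
  calc ∑ a : Fin (q i), F (e.symm (a, g))
      = (f (fun j => ((e.symm (a₀, g) j : ℕ) : ℤ)) *
          Complex.exp (c * ∑ j ∈ Finset.univ.erase i,
            ((l j : ℕ) : ℂ) * ((e.symm (a₀, g) j : ℕ) : ℂ) / (q j : ℂ))) *
        ∑ a : Fin (q i), Complex.exp (c * (((l i : ℕ) : ℂ) * ((a : ℕ) : ℂ) / (q i : ℂ))) := by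
        rw [Finset.mul_sum]
        exact Finset.sum_congr rfl fun a _ => key a
    _ = 0 := by
        have := geom_vanish (q i) (l i : ℕ) h0 (l i).isLt
        rw [← hc] at this
        rw [this, mul_zero]

/-- The `only if` direction: an `(s,t)`-separable periodic `V` has vanishing Fourier
coefficients `V̂(l)` for `l_s ≠ 0`, `l_t ≠ 0`. -/
theorem dft_vanish_of_sepPair {d : ℕ} (q : Fin d → ℕ) (hq : ∀ j, 0 < q j)
    (V Vs Vt : (Fin d → ℤ) → ℂ) (hV : IsPeriodic q V) (s t : Fin d) (hst : s < t)
    (hVs : DependsOnlyOn ({t} : Set (Fin d))ᶜ Vs)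
    (hVt : DependsOnlyOn ({s} : Set (Fin d))ᶜ Vt)
    (hsum : ∀ n, V n = Vs n + Vt n) :
    ∀ l : ∀ j, Fin (q j), (l s : ℕ) ≠ 0 → (l t : ℕ) ≠ 0 →
      dft q V (fun j => ((l j : ℕ) : ℤ)) = 0 := by
  intro l hs ht
  have h1 := sum_vanish q hq Vs t hVs l ht
  have h2 := sum_vanish q hq Vt s hVt l hs
  unfold dft
  simp only [Int.cast_natCast]
  simp only [hsum, add_mul]
  rw [Finset.sum_add_distrib, h1, h2, add_zero, mul_zero]
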